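/- arXiv:2410.15506 — 2 statements merged into one kernel-verified Lean document; each statement's English description precedes it below -/
import Mathlib

section
/- Any code of length n over Σ with minimum relative distance 1 − γ is (1 − ε, L − 1)-combinatorially list decodable where L = ⌊2/ε⌋, provided γ ≤ ε²/2. More precisely, for any set Λ of L distinct codewords, Σ_{j∈[n]} pl_j(Λ) < ε L n. -/
/-!
For a list `Λ` of `L` codewords, count at each coordinate `j` the ordered pairs of distinct
codewords of `Λ` that agree at `j`. The `m = plⱼ(Λ)` codewords sharing the plurality symbol
already give `m (m - 1) ≥ 2 (m - 1)` such pairs, while by the distance assumption each of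
the `L (L - 1)` pairs agrees on at most `γ n` coordinates. Hence
`∑ⱼ plⱼ(Λ) ≤ n + C(L,2) γ n`, which is `< ε L n` for `L = ⌊2/ε⌋` and
`γ ≤ ε²/2`.
Conversely, if `L` codewords were all within distance `(1 - ε) n` of a word `y`, each
would agree with `y` on at least `ε n` coordinates, and the symbols of `y` would witness
`∑ⱼ plⱼ(Λ) ≥ ε L n`.
-/

open Classical in
noncomputable def plurality {n : ℕ} {A : Type*} [Fintype A]
    (Λ : Finset (Fin n → A)) (j : Fin n) : ℕ :=
  Finset.univ.sup (fun α : A => (Λ.filter (fun c => c j = α)).card)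

open Finset

theorem Nat.two_mul_le_two_add_mul_sub_one (m : ℕ) : 2 * m ≤ 2 + m * (m - 1) := by
  cases m with
  | zero => simp
  | succ k => rw [Nat.add_sub_cancel]; nlinarith [Nat.le_mul_self k]

theorem card_filter_eq_add_hammingDist {ι : Type*} [Fintype ι] {β : ι → Type*}
    [∀ i, DecidableEq (β i)] (x y : ∀ i, β i) :
    #{i | x i = y i} + hammingDist x y = Fintype.card ι :=
  card_filter_add_card_filter_not _

theorem two_le_floor_two_div {ε : ℝ} (hε : 0 < ε) (hε1 : ε < 1) : 2 ≤ ⌊2 / ε⌋₊ := by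
  rw [Nat.le_floor_iff (by positivity), le_div_iff₀ hε]
  push_cast
  nlinarith

theorem one_add_choose_floor_two_div_mul_lt {ε : ℝ} (hε : 0 < ε) (hε1 : ε < 1) :
    1 + (⌊2 / ε⌋₊.choose 2 : ℝ) * (ε ^ 2 / 2) < ε * ⌊2 / ε⌋₊ := by
  set L := ⌊2 / ε⌋₊
  have hle : ε * L ≤ 2 := (le_div_iff₀' hε).mp (Nat.floor_le (by positivity))
  have hlt : 2 < ε * (L + 1) := (div_lt_iff₀' hε).mp (Nat.lt_floor_add_one _)
  rw [Nat.cast_choose_two]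
  -- with `x = ε L ∈ (2 - ε, 2]` the claim reads `(2 - x)² < ε x`
  nlinarith [mul_le_mul_of_nonneg_left hlt.le (sub_nonneg.mpr hle)]

section Plurality

open Classical

variable {n : ℕ} {A : Type*} [Fintype A]

theorem card_filter_apply_eq_le_plurality (Λ : Finset (Fin n → A)) (j : Fin n) (α : A) :
    #{c ∈ Λ | c j = α} ≤ plurality Λ j :=
  le_sup (f := fun α => #{c ∈ Λ | c j = α}) (mem_univ α)

theorem two_mul_plurality_le (Λ : Finset (Fin n → A)) (j : Fin n) :
    2 * plurality Λ j ≤ 2 + #{p ∈ Λ.offDiag | p.1 j = p.2 j} := by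
  rw [mul_comm, ← Nat.le_div_iff_mul_le two_pos]
  refine Finset.sup_le fun α _ => ?_
  rw [Nat.le_div_iff_mul_le two_pos, mul_comm]
  set T := {c ∈ Λ | c j = α}
  have hsub : T.offDiag ⊆ {p ∈ Λ.offDiag | p.1 j = p.2 j} := by
    intro p hp
    obtain ⟨h1, h2, hne⟩ := mem_offDiag.mp hp
    rw [mem_filter] at h1 h2
    exact mem_filter.mpr ⟨mem_offDiag.mpr ⟨h1.1, h2.1, hne⟩, h1.2.trans h2.2.symm⟩
  calc 2 * #T ≤ 2 + #T * (#T - 1) := Nat.two_mul_le_two_add_mul_sub_one _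
    _ = 2 + #T.offDiag := by rw [offDiag_card, Nat.mul_sub_one]
    _ ≤ 2 + #{p ∈ Λ.offDiag | p.1 j = p.2 j} := by gcongr

theorem sum_plurality_le (Λ : Finset (Fin n → A)) (t : ℝ)
    (hagree : ∀ c ∈ Λ, ∀ c' ∈ Λ, c ≠ c' → (#{j | c j = c' j} : ℝ) ≤ t) :
    ∑ j, (plurality Λ j : ℝ) ≤ n + (#Λ).choose 2 * t := by
  have hswap : ∑ j, #{p ∈ Λ.offDiag | p.1 j = p.2 j} =
      ∑ p ∈ Λ.offDiag, #{j | p.1 j = p.2 j} :=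
    (sum_card_bipartiteAbove_eq_sum_card_bipartiteBelow
      (r := fun (p : (Fin n → A) × (Fin n → A)) (j : Fin n) => p.1 j = p.2 j)).symm
  have hcount : 2 * ∑ j, plurality Λ j ≤ 2 * n + ∑ p ∈ Λ.offDiag, #{j | p.1 j = p.2 j} :=
    calc 2 * ∑ j, plurality Λ j = ∑ j, 2 * plurality Λ j := mul_sum _ _ _
      _ ≤ ∑ j, (2 + #{p ∈ Λ.offDiag | p.1 j = p.2 j}) :=
          sum_le_sum fun j _ => two_mul_plurality_le Λ j
      _ = 2 * n + ∑ p ∈ Λ.offDiag, #{j | p.1 j = p.2 j} := by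
          rw [sum_add_distrib, hswap, sum_const, card_univ, Fintype.card_fin, smul_eq_mul,
            mul_comm]
  have hpairs : ∑ p ∈ Λ.offDiag, (#{j | p.1 j = p.2 j} : ℝ) ≤ #Λ.offDiag * t := by
    simpa using sum_le_card_nsmul Λ.offDiag _ t fun p hp =>
      hagree p.1 (mem_offDiag.mp hp).1 p.2 (mem_offDiag.mp hp).2.1 (mem_offDiag.mp hp).2.2
  have hoff : (#Λ.offDiag : ℝ) = 2 * (#Λ).choose 2 := by
    rw [offDiag_card, Nat.cast_sub (Nat.le_mul_self _), Nat.cast_choose_two]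
    push_cast
    ring
  have hcount' : 2 * ∑ j, (plurality Λ j : ℝ) ≤
      2 * n + ∑ p ∈ Λ.offDiag, (#{j | p.1 j = p.2 j} : ℝ) := by
    exact_mod_cast hcount
  rw [hoff] at hpairs
  linarith

theorem sum_card_filter_apply_eq_le_sum_plurality (Λ : Finset (Fin n → A)) (y : Fin n → A) :
    ∑ c ∈ Λ, #{j | c j = y j} ≤ ∑ j, plurality Λ j := by
  calc ∑ c ∈ Λ, #{j | c j = y j} = ∑ j, #{c ∈ Λ | c j = y j} :=
        sum_card_bipartiteAbove_eq_sum_card_bipartiteBelow _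
    _ ≤ ∑ j, plurality Λ j :=
        sum_le_sum fun j _ => card_filter_apply_eq_le_plurality Λ j (y j)

theorem card_filter_hammingDist_le_le_of_sum_plurality_lt (C : Finset (Fin n → A))
    (ε : ℝ) (L : ℕ)
    (hC : ∀ Λ ⊆ C, #Λ = L → ∑ j, (plurality Λ j : ℝ) < ε * L * n) (y : Fin n → A) :
    #{c ∈ C | (hammingDist c y : ℝ) ≤ (1 - ε) * n} ≤ L - 1 := by
  by_contra! hcard
  obtain ⟨Λ, hΛ, hΛcard⟩ :=
    exists_subset_card_eq (s := {c ∈ C | (hammingDist c y : ℝ) ≤ (1 - ε) * n}) (n := L)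
      (by omega)
  have hagree : ∀ c ∈ Λ, ε * n ≤ (#{j | c j = y j} : ℝ) := by
    intro c hc
    have hdist := (mem_filter.mp (hΛ hc)).2
    have hsplit : (#{j | c j = y j} : ℝ) + hammingDist c y = n := by
      exact_mod_cast (card_filter_eq_add_hammingDist c y).trans (Fintype.card_fin n)
    linarith
  have hlow : ε * L * n ≤ ∑ j, (plurality Λ j : ℝ) :=
    calc ε * L * n = ∑ _c ∈ Λ, ε * n := by rw [sum_const, hΛcard, nsmul_eq_mul]; ring
      _ ≤ ∑ c ∈ Λ, (#{j | c j = y j} : ℝ) := sum_le_sum hagree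
      _ ≤ ∑ j, (plurality Λ j : ℝ) := by
          exact_mod_cast sum_card_filter_apply_eq_le_sum_plurality Λ y
  exact (hC Λ (hΛ.trans (filter_subset _ _)) hΛcard).not_ge hlow

end Plurality

open Classical in
/-- Any code with minimum relative distance `1 - γ` (i.e. distinct codewords agree on at
most `γ·n` coordinates) with `γ ≤ ε²/2` satisfies `∑_j pl_j(Λ) < ε L n` for any `L = ⌊2/ε⌋`
distinct codewords, and is `(1 - ε, L - 1)`-combinatorially list decodable. -/
theorem stmt_6 {n : ℕ} {A : Type*} [Fintype A] (C : Finset (Fin n → A))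
    (ε γ : ℝ) (hε : 0 < ε) (hε1 : ε < 1) (hγ : γ ≤ ε ^ 2 / 2)
    (L : ℕ) (hLdef : L = ⌊(2 : ℝ) / ε⌋₊)
    (hagree : ∀ c1 ∈ C, ∀ c2 ∈ C, c1 ≠ c2 →
      ((Finset.univ.filter (fun j : Fin n => c1 j = c2 j)).card : ℝ) ≤ γ * n) :
    (∀ Λ ⊆ C, Λ.card = L → (∑ j, (plurality Λ j : ℝ)) < ε * L * n) ∧
    (∀ y : Fin n → A,
      (C.filter (fun c => (hammingDist c y : ℝ) ≤ (1 - ε) * n)).card ≤ L - 1) := by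
  have hL2 : 2 ≤ L := hLdef ▸ two_le_floor_two_div hε hε1
  have hnum := hLdef ▸ one_add_choose_floor_two_div_mul_lt hε hε1
  have hsum : ∀ Λ ⊆ C, #Λ = L → ∑ j, (plurality Λ j : ℝ) < ε * L * n := by
    intro Λ hΛC hcard
    obtain ⟨c, -, c', -, hne⟩ := one_lt_card.mp (hcard ▸ hL2 : 1 < #Λ)
    obtain ⟨j, -⟩ := Function.ne_iff.mp hne
    have hn : (0 : ℝ) < n := by exact_mod_cast j.pos
    calc ∑ j, (plurality Λ j : ℝ) ≤ n + L.choose 2 * (γ * n) :=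
          hcard ▸ sum_plurality_le Λ (γ * n) fun c hc c' hc' => hagree c (hΛC hc) c' (hΛC hc')
      _ ≤ (1 + L.choose 2 * (ε ^ 2 / 2)) * n := by
          rw [add_mul, one_mul, mul_assoc]
          gcongr
      _ < ε * L * n := mul_lt_mul_of_pos_right hnum hn
  exact ⟨hsum, card_filter_hammingDist_le_le_of_sum_plurality_lt C ε L hsum⟩
end

section
/- Let 0 < ε < 1 and suppose a code C of length n satisfies the (β, ε/β, L)-plurality condition for every β with ε < β ≤ 1/2, i.e., for any L distinct codewords Λ, the number of coordinates j with pl_j(Λ) ≥ βL is at most (ε/β)·n. Then for any L distinct codewords Λ, Σ_{j∈[n]} pl_j(Λ) ≤ ε·L·n·(ln L + 2). -/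
/-!
Write `N i` for the number of coordinates with `i ≤ pl_j`. Summing the plurality row by row gives
`∑_j pl_j = ∑_{i=1}^{L} N i`. For `i ≤ L/2` the plurality condition with `β = i/L` (or the trivial
bound `N i ≤ n` when `i ≤ εL`) gives `N i ≤ εLn/i`, contributing `εLn · H_{⌊L/2⌋}`; each of the
remaining `⌈L/2⌉` levels is controlled by the condition at `β = 1/2`, so `N i ≤ 2εn`. The estimate
`H_m ≤ 1 + log m` and `L log 2 ≥ 1` then give `ε L n (log L + 2)`. When `ε ≥ 1/2` the trivial
bound `pl_j ≤ L` already suffices.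
-/

open Finset

open Classical in
theorem plurality_le_card {n : ℕ} {A : Type*} [Fintype A] (Λ : Finset (Fin n → A)) (j : Fin n) :
    plurality Λ j ≤ #Λ :=
  Finset.sup_le fun _ _ => card_filter_le _ _

theorem Finset.sum_eq_sum_Icc_card_filter_le {ι : Type*} {s : Finset ι} {f : ι → ℕ} {L : ℕ}
    (hf : ∀ j ∈ s, f j ≤ L) :
    ∑ j ∈ s, f j = ∑ i ∈ Icc 1 L, #{j ∈ s | i ≤ f j} := by
  simp only [card_filter]
  rw [sum_comm]
  refine sum_congr rfl fun j hj => ?_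
  rw [← card_filter, show {i ∈ Icc 1 L | i ≤ f j} = Icc 1 (f j) by
    ext i; simp only [mem_filter, mem_Icc]; have := hf j hj; omega, Nat.card_Icc]
  omega

open Real in
theorem natCast_mul_harmonic_half_add_le (L : ℕ) :
    (L : ℝ) * harmonic (L / 2) + 2 * (L - L / 2 : ℕ) ≤ L * (log L + 2) := by
  rcases Nat.lt_or_ge L 2 with hL | hL
  · interval_cases L <;> norm_num
  have hL' : (2 : ℝ) ≤ L := by exact_mod_cast hL
  have hhalf : (L / 2 : ℕ) ≤ (L : ℝ) / 2 := by
    rw [le_div_iff₀ two_pos]; exact_mod_cast Nat.div_mul_le_self L 2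
  have hlog : log (L / 2 : ℕ) ≤ log L - log 2 := by
    rw [← log_div (by positivity) two_ne_zero]
    exact log_le_log (by exact_mod_cast Nat.div_pos hL two_pos) hhalf
  have htail : (2 : ℝ) * (L - L / 2 : ℕ) ≤ L + 1 := by
    have : 2 * (L - L / 2) ≤ L + 1 := by omega
    exact_mod_cast this
  have h2 : (1 : ℝ) ≤ L * log 2 := by nlinarith [log_two_gt_d9]
  have := harmonic_le_one_add_log (L / 2)
  nlinarith

section SuperlevelSets

variable {ι : Type*} [Fintype ι] {p : ι → ℕ} {L : ℕ} {ε : ℝ}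

theorem card_superlevel_le_of_le_half
    (hp : ∀ β : ℝ, ε < β → β ≤ 1 / 2 →
      (#{j | β * L ≤ (p j : ℝ)} : ℝ) ≤ ε / β * Fintype.card ι)
    {i : ℕ} (hi : 0 < i) (h2i : 2 * i ≤ L) :
    (#{j | i ≤ p j} : ℝ) ≤ ε * L * Fintype.card ι / i := by
  have hi' : (0 : ℝ) < i := by exact_mod_cast hi
  have hL : (0 : ℝ) < L := by exact_mod_cast (by omega : 0 < L)
  rcases le_or_gt (i : ℝ) (ε * L) with hεi | hεi
  · calc (#{j | i ≤ p j} : ℝ) ≤ Fintype.card ι := by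
          exact_mod_cast (card_filter_le _ _).trans_eq card_univ
      _ = i * Fintype.card ι / i := by field_simp
      _ ≤ ε * L * Fintype.card ι / i := by gcongr
  · have hβ : ε < i / L := by rwa [lt_div_iff₀ hL]
    have hβ' : (i : ℝ) / L ≤ 1 / 2 := by
      rw [div_le_div_iff₀ hL two_pos]; exact_mod_cast (by omega : i * 2 ≤ 1 * L)
    calc (#{j | i ≤ p j} : ℝ) = #{j | i / L * L ≤ (p j : ℝ)} := by
          simp only [div_mul_cancel₀ _ hL.ne', Nat.cast_le]
      _ ≤ ε / (i / L) * Fintype.card ι := hp _ hβ hβ'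
      _ = ε * L * Fintype.card ι / i := by field_simp

theorem card_superlevel_le_of_half_lt
    (hp : ∀ β : ℝ, ε < β → β ≤ 1 / 2 →
      (#{j | β * L ≤ (p j : ℝ)} : ℝ) ≤ ε / β * Fintype.card ι)
    (hε : ε < 1 / 2) {i : ℕ} (hi : L < 2 * i) :
    (#{j | i ≤ p j} : ℝ) ≤ 2 * ε * Fintype.card ι := by
  have hsub : ({j | i ≤ p j} : Finset ι) ⊆ ({j | 1 / 2 * L ≤ (p j : ℝ)} : Finset ι) := by
    intro j
    simp only [mem_filter, mem_univ, true_and]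
    intro hj
    have : (L : ℝ) < 2 * i := by exact_mod_cast hi
    have : (i : ℝ) ≤ p j := by exact_mod_cast hj
    linarith
  calc (#{j | i ≤ p j} : ℝ) ≤ #{j | 1 / 2 * L ≤ (p j : ℝ)} := by
        exact_mod_cast card_le_card hsub
    _ ≤ ε / (1 / 2) * Fintype.card ι := hp _ hε le_rfl
    _ = 2 * ε * Fintype.card ι := by ring

open Real in
theorem sum_le_of_card_superlevel_le (hε : 0 ≤ ε) (hpL : ∀ j, p j ≤ L)
    (hp : ∀ β : ℝ, ε < β → β ≤ 1 / 2 →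
      (#{j | β * L ≤ (p j : ℝ)} : ℝ) ≤ ε / β * Fintype.card ι) :
    ∑ j, (p j : ℝ) ≤ ε * L * Fintype.card ι * (log L + 2) := by
  have hεLn : 0 ≤ ε * L * Fintype.card ι := by positivity
  rcases le_or_gt (1 / 2) ε with hε2 | hε2
  · calc ∑ j, (p j : ℝ) ≤ ∑ _j : ι, (L : ℝ) := sum_le_sum fun j _ => by exact_mod_cast hpL j
      _ = L * Fintype.card ι := by simp [mul_comm]
      _ ≤ 2 * ε * (L * Fintype.card ι) := le_mul_of_one_le_left (by positivity) (by linarith)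
      _ ≤ ε * L * Fintype.card ι * (log L + 2) := by
        have := mul_nonneg hεLn (log_natCast_nonneg L)
        linarith
  have hsplit : Icc 1 L = Icc 1 (L / 2) ∪ Ioc (L / 2) L := by
    ext i; simp only [mem_union, mem_Icc, mem_Ioc]; omega
  have hdisj : Disjoint (Icc 1 (L / 2)) (Ioc (L / 2) L) := by
    rw [disjoint_left]; intro i; simp only [mem_Icc, mem_Ioc]; omega
  have hhead : ∑ i ∈ Icc 1 (L / 2), (#{j | i ≤ p j} : ℝ) ≤
      ε * L * Fintype.card ι * harmonic (L / 2) := by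
    rw [harmonic_eq_sum_Icc]
    push_cast
    rw [mul_sum]
    exact sum_le_sum fun i hi => by
      rw [mem_Icc] at hi
      simpa [div_eq_mul_inv] using card_superlevel_le_of_le_half hp hi.1 (by omega)
  have htail : ∑ i ∈ Ioc (L / 2) L, (#{j | i ≤ p j} : ℝ) ≤
      (L - L / 2 : ℕ) * (2 * ε * Fintype.card ι) := by
    rw [← Nat.card_Ioc, ← nsmul_eq_mul]
    exact sum_le_card_nsmul _ _ _ fun i hi =>
      card_superlevel_le_of_half_lt hp hε2 (by rw [mem_Ioc] at hi; omega)
  have hlayer : ∑ j, (p j : ℝ) = ∑ i ∈ Icc 1 L, (#{j | i ≤ p j} : ℝ) := by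
    exact_mod_cast sum_eq_sum_Icc_card_filter_le fun j _ => hpL j
  have key := natCast_mul_harmonic_half_add_le L
  have hεn : 0 ≤ ε * Fintype.card ι := by positivity
  rw [hlayer, hsplit, sum_union hdisj]
  nlinarith [mul_le_mul_of_nonneg_left key hεn]

end SuperlevelSets

open Classical in
theorem stmt_11_general {n : ℕ} {A : Type*} [Fintype A] (C : Finset (Fin n → A))
    (ε : ℝ) (hε : 0 < ε) (L : ℕ)
    (hcond : ∀ β : ℝ, ε < β → β ≤ 1 / 2 → ∀ Λ ⊆ C, Λ.card = L →
      ((Finset.univ.filter (fun j : Fin n => β * L ≤ (plurality Λ j : ℝ))).card : ℝ)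
        ≤ (ε / β) * n) :
    ∀ Λ ⊆ C, Λ.card = L →
      (∑ j, (plurality Λ j : ℝ)) ≤ ε * L * n * (Real.log L + 2) := by
  intro Λ hΛC hΛL
  have := sum_le_of_card_superlevel_le hε.le (fun j => hΛL ▸ plurality_le_card Λ j)
    fun β hβ hβ' => by simpa only [Fintype.card_fin] using hcond β hβ hβ' Λ hΛC hΛL
  rwa [Fintype.card_fin] at this

open Classical in
/-- If a code satisfies the `(β, ε/β, L)`-plurality condition for every `ε < β ≤ 1/2`,
then for any `L` distinct codewords `Λ`, `∑_j pl_j(Λ) ≤ ε·L·n·(ln L + 2)`. -/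
theorem stmt_11 {n : ℕ} {A : Type*} [Fintype A] (C : Finset (Fin n → A))
    (ε : ℝ) (hε : 0 < ε) (hε1 : ε < 1) (L : ℕ) (hL : 1 ≤ L)
    (hcond : ∀ β : ℝ, ε < β → β ≤ 1 / 2 → ∀ Λ ⊆ C, Λ.card = L →
      ((Finset.univ.filter (fun j : Fin n => β * L ≤ (plurality Λ j : ℝ))).card : ℝ)
        ≤ (ε / β) * n) :
    ∀ Λ ⊆ C, Λ.card = L →
      (∑ j, (plurality Λ j : ℝ)) ≤ ε * L * n * (Real.log L + 2) :=
  stmt_11_general C ε hε L hcond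
end
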